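/- arXiv:1902.07136 — 6 statements merged into one kernel-verified Lean document; each statement's English description precedes it below -/
import Mathlib

section
/- The set of prime numbers p such that the polynomial x² − x − 1 has no root in the field ℤ/pℤ is infinite. Consequently, there are infinitely many finite fields containing no root of x² − x − 1. -/
/-!
If `z² = z + 1` then `(2z - 1)² = 5`, so a root of `x² - x - 1` in `ℤ/pℤ` makes `5` a square
mod `p`. By quadratic reciprocity (`5 ≡ 1 mod 4`) this happens for odd `p` only when `p` is a
square mod `5`, which fails for `p ≡ 3 mod 5`; Dirichlet's theorem supplies infinitely many
such primes.
-/

theorem isSquare_five_of_sq_eq_add_one {R : Type*} [CommRing R] {z : R} (hz : z ^ 2 = z + 1) :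
    IsSquare (5 : R) :=
  ⟨2 * z - 1, by linear_combination (-4 : R) * hz⟩

theorem ZMod.isSquare_five_iff {p : ℕ} [Fact p.Prime] (hp2 : p ≠ 2) :
    IsSquare (5 : ZMod p) ↔ IsSquare (p : ZMod 5) := by
  have : Fact (Nat.Prime 5) := ⟨by norm_num⟩
  exact_mod_cast (ZMod.exists_sq_eq_prime_iff_of_mod_four_eq_one (p := 5) (by norm_num) hp2).symm

/-- The set of primes `p` such that `x² − x − 1` has no root in `ℤ/pℤ` is infinite;
consequently, there are infinitely many finite (prime) fields containing no root of
`x² − x − 1`. -/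
theorem stmt_0 :
    {p : ℕ | p.Prime ∧ ¬∃ z : ZMod p, z ^ 2 = z + 1}.Infinite := by
  refine (Nat.infinite_setOfPred_prime_and_eq_mod (q := 5) (a := 3) (by decide)).mono ?_
  rintro p ⟨hp, hp3⟩
  have := Fact.mk hp
  have hp2 : p ≠ 2 := by
    rintro rfl
    exact absurd hp3 (by decide)
  have hp_nonsq : ¬IsSquare (p : ZMod 5) := hp3 ▸ by decide
  exact ⟨hp, fun ⟨_, hz⟩ ↦ (ZMod.isSquare_five_iff hp2).not.mpr hp_nonsq
    (isSquare_five_of_sq_eq_add_one hz)⟩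
end

section
/- Let F be a field. There exists an element x ∈ F such that x, x + 1, x − 1, x + 2, and 2x + 1 are all nonzero if and only if F is infinite, or F has exactly 4 elements, or F has at least 7 elements. (Equivalently, F is not isomorphic to GF(2), GF(3), or GF(5).) -/
/-!
A value `x` is excluded exactly when it is one of the at most five roots `0, -1, 1, -2, -1/2` of
`x (x + 1) (x - 1) (x + 2) (2x + 1)`; in characteristic `2` these collapse to `0, 1`. So a good `x`
exists as soon as `F` has more elements than that, which covers infinite fields, `GF(4)` and fields
with at least `7` elements. Conversely a field with fewer than `7` elements other than `GF(4)` has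
prime order `2`, `3` or `5`, hence is `ZMod p`, where every element is excluded by direct check.
-/

theorem two_eq_zero_of_card_eq_four {F : Type*} [Field F] [Fintype F]
    (h : Fintype.card F = 4) : (2 : F) = 0 := by
  have h4 := FiniteField.cast_card_eq_zero F
  rw [h] at h4
  exact mul_self_eq_zero.mp (by linear_combination h4)

theorem card_field_eq_two_or_three_or_five {F : Type*} [Field F] [Fintype F]
    (h4 : Fintype.card F ≠ 4) (h7 : Fintype.card F < 7) :
    Fintype.card F = 2 ∨ Fintype.card F = 3 ∨ Fintype.card F = 5 := by
  have hpow := FiniteField.isPrimePow_card F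
  have h2 := hpow.two_le
  interval_cases Fintype.card F <;> simp_all +decide

/-- The possible images of the generator `α` under a homomorphism from the Pappus-template partial
field. -/
def IsPTValue {R : Type*} [Ring R] (x : R) : Prop :=
  x ≠ 0 ∧ x + 1 ≠ 0 ∧ x - 1 ≠ 0 ∧ x + 2 ≠ 0 ∧ 2 * x + 1 ≠ 0

namespace IsPTValue

theorem map_iff {R S : Type*} [Ring R] [Ring S] (e : R ≃+* S) {x : R} :
    IsPTValue (e x) ↔ IsPTValue x := by
  simp only [IsPTValue, ← map_one e, ← map_ofNat e 2, ← map_add, ← map_sub, ← map_mul,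
    map_ne_zero_iff e e.injective]

theorem not_of_zmod {p : ℕ} (hp : p = 2 ∨ p = 3 ∨ p = 5) (x : ZMod p) : ¬ IsPTValue x := by
  unfold IsPTValue
  rcases hp with rfl | rfl | rfl <;> revert x <;> decide

variable {F : Type*} [Field F]

theorem not_of_card_eq {p : ℕ} (hp : p = 2 ∨ p = 3 ∨ p = 5) [Fintype F]
    (hF : Fintype.card F = p) (x : F) : ¬ IsPTValue x := by
  have hprime : p.Prime := by rcases hp with rfl | rfl | rfl <;> norm_num
  let e := ZMod.ringEquivOfPrime F hprime hF
  rw [← e.apply_symm_apply x, map_iff e]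
  exact not_of_zmod hp _

/-- In characteristic `2` the factor `2x + 1` has no root, and its "root" `-2⁻¹` is the junk
value `0`. -/
def exceptional (F : Type*) [Field F] [DecidableEq F] : Finset F := {0, -1, 1, -2, -2⁻¹}

theorem of_notMem_exceptional [DecidableEq F] {x : F} (hx : x ∉ exceptional F) : IsPTValue x := by
  simp only [exceptional, Finset.mem_insert, Finset.mem_singleton, not_or] at hx
  obtain ⟨h0, hm1, h1, hm2, hhalf⟩ := hx
  refine ⟨h0, fun h ↦ hm1 (by linear_combination h), fun h ↦ h1 (by linear_combination h),
    fun h ↦ hm2 (by linear_combination h), fun h ↦ hhalf ?_⟩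
  have h2 : (2 : F) ≠ 0 := by rintro h2; simp [h2] at h
  field_simp
  linear_combination h

theorem card_exceptional_le_five [DecidableEq F] : (exceptional F).card ≤ 5 :=
  Finset.card_le_five

theorem card_exceptional_le_two [DecidableEq F] (h2 : (2 : F) = 0) :
    (exceptional F).card ≤ 2 := by
  have hneg : (-1 : F) = 1 := by linear_combination -h2
  have hsub : exceptional F ⊆ {0, 1} := by
    simp [exceptional, Finset.insert_subset_iff, hneg, h2]
  exact (Finset.card_le_card hsub).trans Finset.card_le_two

theorem exists_of_card_exceptional_lt [DecidableEq F] [Fintype F]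
    (h : (exceptional F).card < Fintype.card F) : ∃ x : F, IsPTValue x := by
  obtain ⟨x, -, hx⟩ := Finset.exists_mem_notMem_of_card_lt_card h
  exact ⟨x, of_notMem_exceptional hx⟩

theorem exists_of_infinite [Infinite F] : ∃ x : F, IsPTValue x := by
  classical
  obtain ⟨x, hx⟩ := Infinite.exists_notMem_finset (exceptional F)
  exact ⟨x, of_notMem_exceptional hx⟩

theorem exists_of_card_eq_four [Fintype F] (h : Fintype.card F = 4) : ∃ x : F, IsPTValue x := by
  classical
  apply exists_of_card_exceptional_lt
  have := card_exceptional_le_two (two_eq_zero_of_card_eq_four h)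
  omega

theorem exists_of_seven_le_card [Fintype F] (h : 7 ≤ Fintype.card F) : ∃ x : F, IsPTValue x := by
  classical
  apply exists_of_card_exceptional_lt
  have := card_exceptional_le_five (F := F)
  omega

end IsPTValue

/-- A field `F` admits an element `x` with `x`, `x+1`, `x−1`, `x+2`, `2x+1` all nonzero
iff `F` is infinite, has exactly 4 elements, or has at least 7 elements. -/
theorem stmt_2 (F : Type*) [Field F] :
    (∃ x : F, x ≠ 0 ∧ x + 1 ≠ 0 ∧ x - 1 ≠ 0 ∧ x + 2 ≠ 0 ∧ 2 * x + 1 ≠ 0) ↔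
      (Infinite F ∨ Nat.card F = 4 ∨ 7 ≤ Nat.card F) := by
  change (∃ x : F, IsPTValue x) ↔ _
  rcases finite_or_infinite F with hF | hF
  · have := Fintype.ofFinite F
    rw [Nat.card_eq_fintype_card, or_iff_right (not_infinite_iff_finite.mpr hF)]
    constructor
    · rintro ⟨x, hx⟩
      by_contra! h
      exact IsPTValue.not_of_card_eq (card_field_eq_two_or_three_or_five h.1 h.2) rfl x hx
    · rintro (h4 | h7)
      · exact IsPTValue.exists_of_card_eq_four h4
      · exact IsPTValue.exists_of_seven_le_card h7
  · exact iff_of_true IsPTValue.exists_of_infinite (Or.inl hF)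
end

section
/- Let F be a field. There exist elements x₁, x₂ ∈ F such that x₁, x₂, x₁ − 1, x₂ − 1, x₁ − x₂, x₁x₂ − x₁ + 1, and x₁x₂ − x₂ + 1 are all nonzero if and only if F is infinite, or F has exactly 4 elements, or F has at least 7 elements. (Equivalently, F is not isomorphic to GF(2), GF(3), or GF(5).) -/
/-!
Call `(x₁, x₂)` a Pappus pair if the seven expressions are nonzero. In a Pappus pair `0, 1, x₁, x₂`
are distinct, so a finite field admitting one has at least four elements; it cannot have six since
its order is a prime power, nor five since `ZMod 5` has no Pappus pair. Conversely, for `a ∉ {0, 1}`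
each of the seven conditions on `(a, b)` excludes at most one value of `b`, namely one of
`0, 1, a, (a - 1) / a, 1 / (1 - a)`, so six elements suffice; in `GF(4)`, of characteristic two,
`(a, a + 1)` is a Pappus pair.
-/

def IsPappusPair {R : Type*} [Ring R] (x₁ x₂ : R) : Prop :=
  x₁ ≠ 0 ∧ x₂ ≠ 0 ∧ x₁ - 1 ≠ 0 ∧ x₂ - 1 ≠ 0 ∧ x₁ - x₂ ≠ 0 ∧
    x₁ * x₂ - x₁ + 1 ≠ 0 ∧ x₁ * x₂ - x₂ + 1 ≠ 0

theorem not_isPappusPair_zmod_five (x₁ x₂ : ZMod 5) : ¬IsPappusPair x₁ x₂ := by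
  revert x₁ x₂
  unfold IsPappusPair
  decide

namespace IsPappusPair

section Ring

variable {R S : Type*} [Ring R] [Ring S] {x₁ x₂ : R}

theorem map {f : R →+* S} (hf : Function.Injective f) (h : IsPappusPair x₁ x₂) :
    IsPappusPair (f x₁) (f x₂) := by
  simp only [IsPappusPair, ← map_one f, ← map_sub, ← map_mul, ← map_add,
    map_ne_zero_iff f hf] at h ⊢
  exact h

theorem four_le_card [Fintype R] (h : IsPappusPair x₁ x₂) : 4 ≤ Fintype.card R := by
  classical
  obtain ⟨h₁, h₂, h₁₁, h₂₁, h₁₂, -, -⟩ := h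
  rw [sub_ne_zero] at h₁₁ h₂₁ h₁₂
  have : Nontrivial R := nontrivial_of_ne _ _ h₁
  calc 4 = ({0, 1, x₁, x₂} : Finset R).card :=
        (Finset.card_eq_four.mpr ⟨0, 1, x₁, x₂, zero_ne_one, h₁.symm, h₂.symm, h₁₁.symm,
          h₂₁.symm, h₁₂, rfl⟩).symm
    _ ≤ Fintype.card R := Finset.card_le_univ _

end Ring

section Field

variable {F : Type*} [Field F] [Fintype F] {x₁ x₂ : F}

theorem card_ne_five (h : IsPappusPair x₁ x₂) : Fintype.card F ≠ 5 := by
  intro h5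
  have : Fact (Nat.Prime 5) := ⟨by norm_num⟩
  let e : F ≃+* ZMod 5 := FiniteField.ringEquivOfCardEq (h5.trans (ZMod.card 5).symm)
  exact not_isPappusPair_zmod_five _ _ (h.map (f := (e : F →+* ZMod 5)) e.injective)

theorem card_eq_four_or_seven_le (h : IsPappusPair x₁ x₂) :
    Fintype.card F = 4 ∨ 7 ≤ Fintype.card F := by
  have h6 : Fintype.card F ≠ 6 := fun h6 ↦
    absurd (FiniteField.isPrimePow_card F) (by rw [h6]; decide)
  have := h.four_le_card
  have := h.card_ne_five
  omega

end Field

end IsPappusPair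

section Existence

variable {R F : Type*} [Field F]

theorem isPappusPair_of_ne {a b : F} (ha₀ : a ≠ 0) (ha₁ : a ≠ 1) (hb₀ : b ≠ 0) (hb₁ : b ≠ 1)
    (hba : b ≠ a) (hb₂ : b ≠ (a - 1) / a) (hb₃ : b ≠ 1 / (1 - a)) : IsPappusPair a b := by
  have : 1 - a ≠ 0 := sub_ne_zero.mpr ha₁.symm
  refine ⟨ha₀, hb₀, sub_ne_zero.mpr ha₁, sub_ne_zero.mpr hb₁, sub_ne_zero.mpr hba.symm,
    fun h ↦ hb₂ ?_, fun h ↦ hb₃ ?_⟩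
  · field_simp
    linear_combination h
  · field_simp
    linear_combination -h

theorem isPappusPair_add_one [CommRing R] [NoZeroDivisors R] (h2 : (2 : R) = 0) {a : R}
    (ha₀ : a ≠ 0) (ha₁ : a ≠ 1) : IsPappusPair a (a + 1) := by
  have : Nontrivial R := nontrivial_of_ne _ _ ha₀
  have ha₁' : a + 1 ≠ 0 := fun h ↦ ha₁ (by linear_combination h - h2)
  refine ⟨ha₀, ha₁', sub_ne_zero.mpr ha₁, by simpa using ha₀, by simp, fun h ↦ ?_, fun h ↦ ?_⟩
  · exact pow_ne_zero 2 ha₁' (by linear_combination h + a * h2)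
  · exact pow_ne_zero 2 ha₀ (by linear_combination h)

theorem exists_notMem_finset_of_card_lt {s : Finset R} (h : Infinite R ∨ s.card < Nat.card R) :
    ∃ x, x ∉ s := by
  rcases h with h | h
  · exact Infinite.exists_notMem_finset s
  · have : Fintype R := @Fintype.ofFinite R (Nat.finite_of_card_ne_zero (by omega))
    rw [Nat.card_eq_fintype_card, ← Finset.card_univ] at h
    obtain ⟨x, -, hx⟩ := Finset.exists_mem_notMem_of_card_lt_card h
    exact ⟨x, hx⟩

theorem exists_isPappusPair_of_card (h : Infinite F ∨ 6 ≤ Nat.card F) :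
    ∃ x₁ x₂ : F, IsPappusPair x₁ x₂ := by
  classical
  have avoid (s : Finset F) (hs : s.card ≤ 5) : ∃ x, x ∉ s :=
    exists_notMem_finset_of_card_lt (h.imp_right (by omega))
  obtain ⟨a, ha⟩ := avoid {0, 1} (Finset.card_le_two.trans (by norm_num))
  obtain ⟨b, hb⟩ := avoid {0, 1, a, (a - 1) / a, 1 / (1 - a)} Finset.card_le_five
  simp only [Finset.mem_insert, Finset.mem_singleton, not_or] at ha hb
  obtain ⟨ha₀, ha₁⟩ := ha
  obtain ⟨hb₀, hb₁, hba, hb₂, hb₃⟩ := hb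
  exact ⟨a, b, isPappusPair_of_ne ha₀ ha₁ hb₀ hb₁ hba hb₂ hb₃⟩

theorem exists_isPappusPair_of_card_eq_four (h : Nat.card F = 4) :
    ∃ x₁ x₂ : F, IsPappusPair x₁ x₂ := by
  classical
  have : Fintype F := @Fintype.ofFinite F (Nat.finite_of_card_ne_zero (by omega))
  have h2 : (2 : F) = 0 := by
    have h4 : ((Fintype.card F : ℕ) : F) = 0 := FiniteField.cast_card_eq_zero F
    rw [← Nat.card_eq_fintype_card, h] at h4
    exact pow_eq_zero_iff two_ne_zero |>.mp (by linear_combination h4)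
  obtain ⟨a, ha⟩ := exists_notMem_finset_of_card_lt (s := ({0, 1} : Finset F))
    (Or.inr (Finset.card_le_two.trans_lt (by omega)))
  simp only [Finset.mem_insert, Finset.mem_singleton, not_or] at ha
  exact ⟨a, a + 1, isPappusPair_add_one h2 ha.1 ha.2⟩

end Existence

/-- A field `F` admits elements `x₁, x₂` with `x₁`, `x₂`, `x₁−1`, `x₂−1`, `x₁−x₂`,
`x₁x₂−x₁+1`, `x₁x₂−x₂+1` all nonzero iff `F` is infinite, has exactly 4 elements, or has
at least 7 elements. -/
theorem stmt_3 (F : Type*) [Field F] :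
    (∃ x₁ x₂ : F, x₁ ≠ 0 ∧ x₂ ≠ 0 ∧ x₁ - 1 ≠ 0 ∧ x₂ - 1 ≠ 0 ∧ x₁ - x₂ ≠ 0 ∧
      x₁ * x₂ - x₁ + 1 ≠ 0 ∧ x₁ * x₂ - x₂ + 1 ≠ 0) ↔
      (Infinite F ∨ Nat.card F = 4 ∨ 7 ≤ Nat.card F) := by
  change (∃ x₁ x₂ : F, IsPappusPair x₁ x₂) ↔ _
  constructor
  · rintro ⟨x₁, x₂, h⟩
    rcases finite_or_infinite F with hF | hF
    · have := Fintype.ofFinite F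
      rw [Nat.card_eq_fintype_card]
      exact Or.inr h.card_eq_four_or_seven_le
    · exact Or.inl hF
  · rintro (hF | h4 | h7)
    · exact exists_isPappusPair_of_card (Or.inl hF)
    · exact exists_isPappusPair_of_card_eq_four h4
    · exact exists_isPappusPair_of_card (Or.inr (by omega))
end

section
/- Let R be a commutative ring and let G be a subgroup of the group of units of R with −1 ∈ G. Call a matrix A over R a P-matrix (for the partial field P = (R, G)) if the determinant of every square submatrix of A lies in {0} ∪ G. If A is a P-matrix with rows indexed by a finite type m and columns indexed by a finite type n, then the block matrix [I | A] (the m × (m ⊕ n) matrix whose left block is the m × m identity matrix and whose right block is A) is also a P-matrix. -/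
/-- `A` is a `P`-matrix for the partial field `P = (R, G)`: the determinant of every
square submatrix of `A` lies in `{0} ∪ G`. -/
def IsPMatrix {R : Type*} [CommRing R] (G : Subgroup Rˣ) {m n : Type*}
    (A : Matrix m n R) : Prop :=
  ∀ (k : ℕ) (f : Fin k → m) (g : Fin k → n), Function.Injective f → Function.Injective g →
    (A.submatrix f g).det = 0 ∨ ∃ u : Rˣ, u ∈ G ∧ ((u : Rˣ) : R) = (A.submatrix f g).det

/-!
Induct on the size of the square submatrix `S` of `[I | A]`. If every column of `S` comes from
`A`, then `S` is a submatrix of `A`. Otherwise some column of `S` comes from `I`, so it is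
either zero or a unit vector; expanding `det S` along it gives `0` or `±` the determinant of a
smaller square submatrix of `[I | A]`, and `-1 ∈ G` absorbs the sign.
-/

open Function Matrix

section PartialField

variable {R : Type*} [CommRing R]

/-- The partial field `P = (R, G)` as a subset of `R`. -/
def partialField (G : Subgroup Rˣ) : Set R := insert 0 (Units.val '' (G : Set Rˣ))

variable {G : Subgroup Rˣ}

theorem zero_mem_partialField : (0 : R) ∈ partialField G := Set.mem_insert _ _

theorem one_mem_partialField : (1 : R) ∈ partialField G :=
  Or.inr ⟨1, G.one_mem, Units.val_one⟩

theorem neg_one_pow_mul_mem_partialField (hG : (-1 : Rˣ) ∈ G) {x : R}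
    (hx : x ∈ partialField G) (k : ℕ) : (-1) ^ k * x ∈ partialField G := by
  rcases hx with rfl | ⟨u, hu, rfl⟩
  · rw [mul_zero]
    exact zero_mem_partialField
  · exact Or.inr ⟨(-1) ^ k * u, G.mul_mem (G.pow_mem hG k) hu, by push_cast; rfl⟩

theorem isPMatrix_iff {m n : Type*} (A : Matrix m n R) :
    IsPMatrix G A ↔ ∀ (k : ℕ) (f : Fin k → m) (g : Fin k → n), Injective f → Injective g →
      (A.submatrix f g).det ∈ partialField G :=
  Iff.rfl

end PartialField

namespace Matrix

variable {R : Type*} [CommRing R]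

theorem det_eq_neg_one_pow_mul_det_of_col_eq_single {k : ℕ}
    (M : Matrix (Fin (k + 1)) (Fin (k + 1)) R) {i j : Fin (k + 1)}
    (hcol : Mᵀ j = Pi.single i 1) :
    M.det = (-1) ^ (i + j : ℕ) * (M.submatrix i.succAbove j.succAbove).det := by
  have hcol' (i' : Fin (k + 1)) : M i' j = (Pi.single i 1 : Fin (k + 1) → R) i' :=
    congrFun hcol i'
  rw [det_succ_column M j, Fintype.sum_eq_single i fun i' hi' => by
    rw [hcol', Pi.single_eq_of_ne hi', mul_zero, zero_mul], hcol', Pi.single_eq_same, mul_one]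

variable {l m n : Type*} [DecidableEq m] (A : Matrix m n R) {f : l → m} {g : l → m ⊕ n} {j : l}

theorem transpose_submatrix_one_fromCols_apply_of_eq_inl [DecidableEq l] (hf : Injective f)
    {i : l} (hj : g j = Sum.inl (f i)) :
    ((fromCols (1 : Matrix m m R) A).submatrix f g)ᵀ j = Pi.single i 1 := by
  ext i'
  simp [hj, one_apply, Pi.single_apply, hf.eq_iff]

theorem submatrix_one_fromCols_apply_of_eq_inl_of_notMem {c : m} (hc : c ∉ Set.range f)
    (hj : g j = Sum.inl c) (i' : l) :
    (fromCols (1 : Matrix m m R) A).submatrix f g i' j = 0 := by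
  simp only [submatrix_apply, hj, fromCols_apply_inl]
  exact one_apply_ne fun h => hc ⟨i', h⟩

end Matrix

theorem IsPMatrix.one_fromCols {R : Type*} [CommRing R] {G : Subgroup Rˣ}
    (hG : (-1 : Rˣ) ∈ G) {m n : Type*} [DecidableEq m] {A : Matrix m n R}
    (hA : IsPMatrix G A) : IsPMatrix G (fromCols (1 : Matrix m m R) A) := by
  rw [isPMatrix_iff] at hA ⊢
  intro k
  induction k with
  | zero => intro f g _ _; rw [det_fin_zero]; exact one_mem_partialField
  | succ k ih =>
    intro f g hf hg
    by_cases hinl : ∃ j c, g j = Sum.inl c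
    · obtain ⟨j, c, hj⟩ := hinl
      by_cases hc : c ∈ Set.range f
      · obtain ⟨i, rfl⟩ := hc
        rw [det_eq_neg_one_pow_mul_det_of_col_eq_single _
          (transpose_submatrix_one_fromCols_apply_of_eq_inl A hf hj), submatrix_submatrix]
        exact neg_one_pow_mul_mem_partialField hG
          (ih _ _ (hf.comp Fin.succAbove_right_injective)
            (hg.comp Fin.succAbove_right_injective)) _
      · rw [det_eq_zero_of_column_eq_zero j
          (submatrix_one_fromCols_apply_of_eq_inl_of_notMem A hc hj)]
        exact zero_mem_partialField
    · have hinr : ∀ j, ∃ x, Sum.inr x = g j := fun j => by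
        cases h : g j with
        | inl c => exact (hinl ⟨j, c, h⟩).elim
        | inr x => exact ⟨x, rfl⟩
      choose g' hg' using hinr
      obtain rfl : Sum.inr ∘ g' = g := funext hg'
      exact hA _ f g' hf hg.of_comp

theorem stmt_7_general {R : Type*} [CommRing R] (G : Subgroup Rˣ) (hG : (-1 : Rˣ) ∈ G)
    {m n : Type*} [DecidableEq m]
    (A : Matrix m n R) (hA : IsPMatrix G A) :
    IsPMatrix G (Matrix.fromCols (1 : Matrix m m R) A) :=
  hA.one_fromCols hG

/-- If `A` is a `P`-matrix, then so is `[I | A]`. -/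
theorem stmt_7 {R : Type*} [CommRing R] (G : Subgroup Rˣ) (hG : (-1 : Rˣ) ∈ G)
    {m n : Type*} [Fintype m] [Fintype n] [DecidableEq m]
    (A : Matrix m n R) (hA : IsPMatrix G A) :
    IsPMatrix G (Matrix.fromCols (1 : Matrix m m R) A) :=
  stmt_7_general G hG A hA
end

section
/- Let A be the 3 × 9 matrix over GF(4) with rows (1,0,0,1,1,0,α,α,1), (0,1,0,1,0,1,α,1,α), (0,0,1,0,1,1,1,0,1); its vector matroid is the matroid Y₉ (the Perles configuration). If a field F realizes the column matroid of A, then F contains an element z with z² = z + 1. (That is, Y₉ is representable over a field only if that field contains a root of x² − x − 1.) -/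
/-!
Express every column of a realization in the basis formed by its first three columns: the
result is a matrix `U` over `F` whose first three columns are the unit vectors and whose
vanishing `3 × 3` minors are exactly those of `A`. The four lines of `Y₉` through two of the
first three points put zeros into columns 3, 4, 5 and 7 (counting from 0), so these are
`(a, b, 0)`, `(c, 0, d)`, `(0, e, f)` and `(g, h, 0)`. Eliminating the remaining coordinates
from the other six lines (using that some minors do not vanish) gives `(ah - bg)² = ah · bg`
with `bg ≠ 0`, so `z = (ah - bg) / bg` satisfies `z² = z + 1`.
-/

def RealizesColumnMatroid {K : Type*} [Field K] {m k : ℕ}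
    (A : Matrix (Fin m) (Fin k) K) (F : Type*) [Field F] : Prop :=
  ∃ (n : ℕ) (B : Matrix (Fin n) (Fin k) F),
    ∀ S : Set (Fin k),
      LinearIndependent F (fun j : S => B.transpose (j : Fin k)) ↔
        LinearIndependent K (fun j : S => A.transpose (j : Fin k))

open Function Submodule Matrix

theorem Matrix.det_submatrix_id_eq_zero_iff {K ι : Type*} [Field K] {m : ℕ}
    (M : Matrix (Fin m) ι K) (f : Fin m → ι) :
    (M.submatrix id f).det = 0 ↔ ¬ LinearIndependent K (M.col ∘ f) := by
  rw [iff_not_comm, ← ne_eq, ← isUnit_iff_ne_zero, ← isUnit_iff_isUnit_det]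
  exact linearIndependent_cols_iff_isUnit

theorem mem_span_of_linearIndependent_comp_iff {K F V ι : Type*} [Field K] [Field F]
    [AddCommGroup V] [Module F V] {m : ℕ} {v : ι → V} {w : ι → Fin m → K}
    (hvw : ∀ f : Option (Fin m) → ι, LinearIndependent F (v ∘ f) ↔ LinearIndependent K (w ∘ f))
    {e : Fin m → ι} (he : LinearIndependent F (v ∘ e)) (j : ι) :
    v j ∈ span F (Set.range (v ∘ e)) := by
  by_contra hj
  have hli : LinearIndependent F (v ∘ fun o => Option.casesOn' o j e) := by
    convert he.option hj with o
    cases o <;> rfl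
  have hcard := ((hvw _).1 hli).fintype_card_le_finrank
  simp at hcard

namespace RealizesColumnMatroid

variable {K F : Type*} [Field K] [Field F] {m k : ℕ} {A : Matrix (Fin m) (Fin k) K}

theorem exists_linearIndependent_comp_iff (h : RealizesColumnMatroid A F) :
    ∃ (n : ℕ) (B : Matrix (Fin n) (Fin k) F), ∀ {ι : Type} (f : ι → Fin k),
      LinearIndependent F (B.col ∘ f) ↔ LinearIndependent K (A.col ∘ f) := by
  obtain ⟨n, B, hB⟩ := h
  refine ⟨n, B, fun f => ?_⟩
  by_cases hf : Injective f
  · exact (linearIndependent_equiv' (Equiv.ofInjective f hf)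
      (f := fun j : Set.range f => B.col j) rfl).trans
      ((hB _).trans (linearIndependent_equiv' (Equiv.ofInjective f hf) rfl).symm)
  · exact iff_of_false (fun hB => hf hB.injective.of_comp) (fun hA => hf hA.injective.of_comp)

theorem exists_submatrix_eq_one_and_det_eq_zero_iff (h : RealizesColumnMatroid A F)
    {e : Fin m → Fin k} (he : (A.submatrix id e).det ≠ 0) :
    ∃ U : Matrix (Fin m) (Fin k) F, U.submatrix id e = 1 ∧
      ∀ f : Fin m → Fin k, (U.submatrix id f).det = 0 ↔ (A.submatrix id f).det = 0 := by
  classical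
  obtain ⟨n, B, hB⟩ := h.exists_linearIndependent_comp_iff
  have hBe : LinearIndependent F (B.col ∘ e) :=
    (hB e).2 (not_not.1 <| (A.det_submatrix_id_eq_zero_iff e).not.1 he)
  set φ := Fintype.linearCombination F (B.col ∘ e)
  have hφ : Injective φ := linearIndependent_iff_injective_fintypeLinearCombination.1 hBe
  have hrange (j : Fin k) : B.col j ∈ LinearMap.range φ := by
    rw [Fintype.range_linearCombination]
    exact mem_span_of_linearIndependent_comp_iff hB hBe j
  choose u hu using hrange
  refine ⟨(Matrix.of u)ᵀ, ?_, fun f => ?_⟩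
  · have hue (i : Fin m) : u (e i) = Pi.single i 1 :=
      hφ (by rw [hu, Fintype.linearCombination_apply_single, one_smul]; rfl)
    ext i j
    simp [hue, Matrix.one_apply, Pi.single_apply]
  · rw [det_submatrix_id_eq_zero_iff, det_submatrix_id_eq_zero_iff, not_iff_not, ← hB f]
    have hcol : B.col ∘ f = φ ∘ (u ∘ f) := funext fun j => (hu (f j)).symm
    rw [hcol, φ.linearIndependent_iff (LinearMap.ker_eq_bot.2 hφ)]
    rfl

end RealizesColumnMatroid

def perlesMatrix {K : Type*} [Field K] (α : K) : Matrix (Fin 3) (Fin 9) K :=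
  !![1, 0, 0, 1, 1, 0, α, α, 1;
     0, 1, 0, 1, 0, 1, α, 1, α;
     0, 0, 1, 0, 1, 1, 1, 0, 1]

def perlesLines : List (Fin 3 → Fin 9) :=
  [![0, 1, 3], ![0, 2, 4], ![1, 2, 5], ![0, 1, 7], ![3, 4, 5],
   ![2, 3, 6], ![1, 4, 8], ![0, 6, 8], ![4, 6, 7], ![5, 7, 8]]

def perlesBases : List (Fin 3 → Fin 9) :=
  [![0, 1, 2], ![0, 2, 3], ![1, 2, 4], ![0, 1, 4], ![0, 1, 5], ![1, 2, 6], ![1, 2, 7], ![1, 2, 8]]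

section PerlesMatrix

variable {K : Type*} [Field K] {α : K}

theorem perlesMatrix_det_submatrix_eq_zero [CharP K 2] (hα : α ^ 2 = α + 1) :
    ∀ f ∈ perlesLines, ((perlesMatrix α).submatrix id f).det = 0 := by
  have h2 : (2 : K) = 0 := CharTwo.two_eq_zero
  simp only [perlesLines, List.forall_mem_cons, List.not_mem_nil, IsEmpty.forall_iff, forall_const]
  refine ⟨?_, ?_, ?_, ?_, ?_, ?_, ?_, ?_, ?_, ?_, trivial⟩ <;>
    simp [perlesMatrix, det_fin_three]
  · linear_combination -h2
  · linear_combination -hα - h2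
  · linear_combination hα

theorem perlesMatrix_det_submatrix_ne_zero (hα : α ^ 2 = α + 1) :
    ∀ f ∈ perlesBases, ((perlesMatrix α).submatrix id f).det ≠ 0 := by
  have hα0 : α ≠ 0 := by rintro rfl; simp at hα
  simp only [perlesBases, List.forall_mem_cons, List.not_mem_nil, IsEmpty.forall_iff, forall_const]
  refine ⟨?_, ?_, ?_, ?_, ?_, ?_, ?_, ?_, trivial⟩ <;>
    simp [perlesMatrix, det_fin_three, hα0]

end PerlesMatrix

section Field

variable {F : Type*} [Field F]

theorem exists_sq_eq_add_one_of_sub_sq_eq_mul {x y : F} (hy : y ≠ 0) (h : (x - y) ^ 2 = x * y) :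
    ∃ z : F, z ^ 2 = z + 1 :=
  ⟨(x - y) / y, by field_simp; linear_combination h⟩

/-- Columns 3, …, 8 of `U` are `(a, b, 0)`, `(c, 0, d)`, `(0, e, f)`, `(p, q, r)`, `(g, h, 0)`,
`(s, t, w)`; `hijk` says that columns `i, j, k` are dependent. -/
theorem perles_sub_sq_eq_mul {a b c d e f g h p q r s t w : F}
    (hc : c ≠ 0) (hd : d ≠ 0) (hf : f ≠ 0) (hp : p ≠ 0) (hs : s ≠ 0)
    (h345 : a * d * e + b * c * f = 0) (h236 : a * q = b * p) (h148 : c * w = d * s)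
    (h068 : q * w = r * t) (h467 : d * (p * h - q * g) = c * r * h)
    (h578 : f * (g * t - h * s) = e * g * w) :
    (a * h - b * g) ^ 2 = a * h * (b * g) := by
  have hr : a * c * h * r = d * p * (a * h - b * g) := by
    linear_combination -a * h467 - d * g * h236
  have ht : a * g * t = s * (a * h - b * g) :=
    mul_left_cancel₀ (mul_ne_zero hc hf) (by
      linear_combination a * c * h578 + a * e * g * h148 + g * s * h345)
  refine mul_left_cancel₀ (mul_ne_zero (mul_ne_zero hd hp) hs) ?_
  linear_combination -a ^ 2 * c * g * h * h068 - a * g * t * hr - d * p * (a * h - b * g) * ht +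
    a * c * g * h * w * h236 + a * b * g * h * p * h148

theorem exists_sq_eq_add_one_of_perles_minors {U : Matrix (Fin 3) (Fin 9) F}
    (hU : U.submatrix id ![0, 1, 2] = 1)
    (hlines : ∀ f ∈ perlesLines, (U.submatrix id f).det = 0)
    (hbases : ∀ f ∈ perlesBases, (U.submatrix id f).det ≠ 0) : ∃ z : F, z ^ 2 = z + 1 := by
  have hU' := fun i j => congrFun (congrFun hU i) j
  simp only [Nat.succ_eq_add_one, Nat.reduceAdd, Fin.isValue, submatrix_apply, id_eq,
    Fin.forall_fin_succ, cons_val_zero, cons_val_succ, cons_val_fin_one, IsEmpty.forall_iff,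
    and_true, one_apply_eq, Fin.succ_zero_eq_one, ne_eq, zero_ne_one, not_false_eq_true,
    one_apply_ne, Fin.succ_one_eq_two, Fin.reduceEq, Fin.succ_ne_zero] at hU'
  obtain ⟨⟨h00, h01, h02⟩, ⟨h10, h11, h12⟩, ⟨h20, h21, h22⟩⟩ := hU'
  simp only [perlesLines, perlesBases, Fin.isValue, List.mem_cons, List.not_mem_nil, or_false,
    det_fin_three, submatrix_apply, id_eq, forall_eq_or_imp, forall_eq, cons_val_zero, cons_val_one,
    cons_val, h00, h01, h02, h10, h11, h12, h20, h21, h22, mul_one, one_mul, mul_zero, zero_mul,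
    sub_zero, add_zero, zero_sub, neg_eq_zero, sub_self, zero_add, ne_eq, one_ne_zero,
    not_false_eq_true, true_and] at hlines hbases
  obtain ⟨h23, h14, h05, h27, h345, h236, h148, h068, h467, h578⟩ := hlines
  obtain ⟨h13, h04, h24, h25, h06, h07, h08⟩ := hbases
  simp only [h23, h14, h05, h27, mul_zero, zero_mul, sub_zero, add_zero, zero_sub]
    at h345 h467 h578
  refine exists_sq_eq_add_one_of_sub_sq_eq_mul (mul_ne_zero h13 h07) <|
    perles_sub_sq_eq_mul (a := U 0 3) (b := U 1 3) (c := U 0 4) (d := U 2 4) (e := U 1 5)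
      (f := U 2 5) (g := U 0 7) (h := U 1 7) (p := U 0 6) (q := U 1 6) (r := U 2 6) (s := U 0 8)
      (t := U 1 8) (w := U 2 8) h04 h24 h25 h06 h08 (by linear_combination -h345)
      (by linear_combination h236) (by linear_combination -h148) (by linear_combination h068)
      (by linear_combination h467) (by linear_combination h578)

end Field

/-- If a field `F` realizes the matroid `Y₉` (the Perles configuration), then `F`
contains a root of `x² − x − 1`. -/
theorem stmt_10 (α : GaloisField 2 2) (hα : α ^ 2 = α + 1) (F : Type*) [Field F]
    (h : RealizesColumnMatroid
      (!![1, 0, 0, 1, 1, 0, α, α, 1;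
          0, 1, 0, 1, 0, 1, α, 1, α;
          0, 0, 1, 0, 1, 1, 1, 0, 1] :
        Matrix (Fin 3) (Fin 9) (GaloisField 2 2)) F) :
    ∃ z : F, z ^ 2 = z + 1 := by
  obtain ⟨U, hU, hdet⟩ := RealizesColumnMatroid.exists_submatrix_eq_one_and_det_eq_zero_iff
    (A := perlesMatrix α) h (perlesMatrix_det_submatrix_ne_zero hα _ List.mem_cons_self)
  exact exists_sq_eq_add_one_of_perles_minors hU
    (fun f hf => (hdet f).2 (perlesMatrix_det_submatrix_eq_zero hα f hf))
    (fun f hf => (hdet f).not.2 (perlesMatrix_det_submatrix_ne_zero hα f hf))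
end

section
/- Let A be the 3 × 9 matrix over GF(4) with rows (1,0,0,1,0,1,1,1,1), (0,1,0,1,1,α²,α²,α,0), (0,0,1,0,1,1,α,1,α); its vector matroid is the matroid V₁. If a field F realizes the column matroid of A, then F has characteristic 2. (That is, the characteristic set of V₁ is {2}.) -/
open Function Submodule
open scoped Matrix

theorem linearIndependent_range_iff_comp {R V ι κ : Type*} [Ring R] [AddCommGroup V] [Module R V]
    (f : ι → V) {g : κ → ι} (hg : Injective g) :
    LinearIndependent R (fun j : Set.range g => f j) ↔ LinearIndependent R (f ∘ g) :=
  (linearIndependent_equiv' (Equiv.ofInjective g hg) rfl).symm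

theorem Matrix.linearIndependent_col_comp_iff_det_ne_zero {K ι : Type*} [Field K] {m : ℕ}
    (C : Matrix (Fin m) ι K) (g : Fin m → ι) :
    LinearIndependent K (C.col ∘ g) ↔ (C.submatrix id g).det ≠ 0 := by
  rw [← isUnit_iff_ne_zero, ← Matrix.isUnit_iff_isUnit_det,
    ← Matrix.linearIndependent_cols_iff_isUnit]
  rfl

namespace RealizesColumnMatroid

variable {K F : Type*} [Field K] [Field F] {m k : ℕ} {A : Matrix (Fin m) (Fin k) K}

theorem linearIndependent_comp_iff {n : ℕ} {B : Matrix (Fin n) (Fin k) F}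
    (hB : ∀ S : Set (Fin k), LinearIndependent F (fun j : S => Bᵀ j) ↔
      LinearIndependent K (fun j : S => Aᵀ j)) {p : ℕ} (g : Fin p → Fin k) :
    LinearIndependent F (B.col ∘ g) ↔ LinearIndependent K (A.col ∘ g) := by
  by_cases hg : Injective g
  · rw [← linearIndependent_range_iff_comp _ hg, ← linearIndependent_range_iff_comp _ hg]
    exact hB (Set.range g)
  · exact iff_of_false (fun h => hg h.injective.of_comp) (fun h => hg h.injective.of_comp)

theorem exists_submatrix_eq_one (h : RealizesColumnMatroid A F) {b : Fin m → Fin k}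
    (hb : LinearIndependent K (A.col ∘ b)) :
    ∃ C : Matrix (Fin m) (Fin k) F, C.submatrix id b = 1 ∧
      ∀ g : Fin m → Fin k,
        LinearIndependent F (C.col ∘ g) ↔ LinearIndependent K (A.col ∘ g) := by
  classical
  obtain ⟨n, B, hB⟩ := h
  have transfer {p : ℕ} (g : Fin p → Fin k) := linearIndependent_comp_iff hB g
  have hvb : LinearIndependent F (B.col ∘ b) := (transfer b).2 hb
  have hspan (j : Fin k) : B.col j ∈ span F (Set.range (B.col ∘ b)) := by
    by_contra hj
    have hli : LinearIndependent K (A.col ∘ Fin.snoc b j) := by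
      rw [← transfer, Fin.comp_snoc]
      exact linearIndependent_finSnoc.2 ⟨hvb, hj⟩
    simpa using hli.fintype_card_le_finrank
  choose c hc using fun j => (mem_span_range_iff_exists_fun F).1 (hspan j)
  set φ := Fintype.linearCombination F (B.col ∘ b)
  have hφ : Injective φ := hvb.fintypeLinearCombination_injective
  have hφc : φ ∘ c = B.col :=
    funext fun j => by simpa [φ, Fintype.linearCombination_apply] using hc j
  refine ⟨Matrix.of fun i j => c j i, ?_, fun g => ?_⟩
  · ext i i'
    have : c (b i') = Pi.single i' 1 := hφ <| by
      rw [Fintype.linearCombination_apply_single, one_smul]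
      exact congrFun hφc (b i')
    simp [this, Matrix.one_apply, Pi.single_apply]
  · rw [← transfer, ← hφc, comp_assoc, φ.linearIndependent_iff (LinearMap.ker_eq_bot.2 hφ)]
    rfl

end RealizesColumnMatroid

namespace V1

def matrix {K : Type*} [Field K] (α : K) : Matrix (Fin 3) (Fin 9) K :=
  !![1, 0, 0, 1, 0, 1, 1, 1, 1;
     0, 1, 0, 1, 1, α ^ 2, α ^ 2, α, 0;
     0, 0, 1, 0, 1, 1, α, 1, α]

-- Only the three-element nonbases and bases of `V₁` that the argument needs.
def nonbasisTriples : List (Fin 3 → Fin 9) :=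
  [![0, 1, 3], ![1, 2, 4], ![0, 2, 8], ![0, 6, 7], ![1, 5, 7], ![1, 6, 8], ![2, 5, 6],
    ![3, 4, 6], ![3, 7, 8], ![4, 5, 8]]

def basisTriples : List (Fin 3 → Fin 9) :=
  [![1, 2, 3], ![1, 2, 6], ![0, 2, 6], ![0, 1, 4], ![0, 1, 5], ![0, 1, 7], ![0, 1, 8]]

variable {K : Type*} [Field K] {α : K}

theorem det_matrix_eq_zero [CharP K 2] (hα : α ^ 2 = α + 1) :
    ∀ g ∈ nonbasisTriples, ((matrix α).submatrix id g).det = 0 := by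
  have h2 : (2 : K) = 0 := CharTwo.two_eq_zero
  simp only [nonbasisTriples, List.mem_cons, List.not_mem_nil, or_false, forall_eq_or_imp,
    forall_eq, matrix, Matrix.det_fin_three, Matrix.submatrix_apply, id_eq, Matrix.of_apply,
    Matrix.cons_val, mul_one, one_mul, mul_zero, zero_mul, sub_zero, add_zero, sub_self, zero_add,
    zero_sub, neg_add_cancel, true_and]
  exact ⟨by ring, by linear_combination -hα, by linear_combination hα + h2,
    by linear_combination -hα - α * h2⟩

theorem det_matrix_ne_zero (hα : α ^ 2 = α + 1) :
    ∀ g ∈ basisTriples, ((matrix α).submatrix id g).det ≠ 0 := by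
  have hα0 : α ≠ 0 := by rintro rfl; simp at hα
  simp [basisTriples, matrix, Matrix.det_fin_three, hα0]

theorem two_eq_zero_of_minors {F : Type*} [Field F] (C : Matrix (Fin 3) (Fin 9) F)
    (hI : C.submatrix id ![0, 1, 2] = 1)
    (hdep : ∀ g ∈ nonbasisTriples, (C.submatrix id g).det = 0)
    (hindep : ∀ g ∈ basisTriples, (C.submatrix id g).det ≠ 0) : (2 : F) = 0 := by
  obtain ⟨x, y, z, rfl⟩ : ∃ x y z : Fin 9 → F, C = Matrix.of ![x, y, z] :=
    ⟨C 0, C 1, C 2, by ext i j; fin_cases i <;> rfl⟩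
  have hId : x 0 = 1 ∧ x 1 = 0 ∧ x 2 = 0 ∧ y 0 = 0 ∧ y 1 = 1 ∧ y 2 = 0 ∧
      z 0 = 0 ∧ z 1 = 0 ∧ z 2 = 1 := by
    simpa [← Matrix.ext_iff, Fin.forall_fin_succ, Matrix.one_apply, and_assoc] using hI
  simp only [nonbasisTriples, basisTriples, List.mem_cons, List.not_mem_nil, or_false,
    forall_eq_or_imp, forall_eq, Matrix.det_fin_three, Matrix.submatrix_apply, id_eq,
    Matrix.of_apply, Matrix.cons_val, hId, mul_one, one_mul, mul_zero, zero_mul, sub_zero, add_zero,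
    sub_self, zero_add, zero_sub, neg_eq_zero, ne_eq] at hdep hindep
  obtain ⟨hz3, hx4, hy8, d067, d157, d168, d256, d346, d378, d458⟩ := hdep
  obtain ⟨hx3, hx6, hy6, hz4, hz5, hz7, hz8⟩ := hindep
  simp only [hz3, hx4, hy8, mul_zero, zero_mul, add_zero, sub_zero] at d346 d378 d458
  have key : 2 * (x 3 * x 6 * y 6 ^ 2 * z 4 * z 5 * z 7 * z 8) = 0 := by
    linear_combination ((y 4 * z 6 + y 6 * z 4) * x 6 * x 3 * z 5 * z 8) * d067 +
      ((y 4 * z 6 + y 6 * z 4) * x 6 * y 3 * z 6 * z 8) * d157 -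
      ((y 4 * z 6 + y 6 * z 4) * x 6 * y 3 * z 5 * z 7 -
        y 3 * z 6 * z 7 * (y 4 * z 5 * x 6 - z 4 * x 5 * y 6)) * d168 +
      (y 3 * z 6 * z 7 * z 4 * z 6 * x 8) * d256 -
      (y 6 * z 5 * x 6 * z 7 * z 8) * d346 +
      ((y 4 * z 6 + y 6 * z 4) * x 6 * z 5 * z 6) * d378 -
      (y 3 * z 6 * z 7 * x 6 * z 6) * d458
  exact (mul_eq_zero.1 key).resolve_right (by simp [*])

end V1

/-- If a field `F` realizes the matroid `V₁`, then `F` has characteristic 2: the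
characteristic set of `V₁` is `{2}`. -/
theorem stmt_11 (α : GaloisField 2 2) (hα : α ^ 2 = α + 1) (F : Type*) [Field F]
    (h : RealizesColumnMatroid
      (!![1, 0, 0, 1, 0, 1, 1, 1, 1;
          0, 1, 0, 1, 1, α ^ 2, α ^ 2, α, 0;
          0, 0, 1, 0, 1, 1, α, 1, α] :
        Matrix (Fin 3) (Fin 9) (GaloisField 2 2)) F) :
    CharP F 2 := by
  change RealizesColumnMatroid (V1.matrix α) F at h
  have hbasis : LinearIndependent (GaloisField 2 2) ((V1.matrix α).col ∘ ![0, 1, 2]) := by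
    rw [Matrix.linearIndependent_col_comp_iff_det_ne_zero]
    simp [V1.matrix, Matrix.det_fin_three]
  obtain ⟨C, hCI, hC⟩ := h.exists_submatrix_eq_one hbasis
  have hminor (g : Fin 3 → Fin 9) :
      (C.submatrix id g).det = 0 ↔ ((V1.matrix α).submatrix id g).det = 0 := by
    simpa only [Matrix.linearIndependent_col_comp_iff_det_ne_zero, not_iff_not] using hC g
  have h2 : (2 : F) = 0 := V1.two_eq_zero_of_minors C hCI
    (fun g hg => (hminor g).2 (V1.det_matrix_eq_zero hα g hg))
    (fun g hg => mt (hminor g).1 (V1.det_matrix_ne_zero hα g hg))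
  exact CharTwo.of_one_ne_zero_of_two_eq_zero one_ne_zero h2
end
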